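/- arXiv:1708.00831 — 6 statements merged into one kernel-verified Lean document; each statement's English description precedes it below -/
import Mathlib

section
/- Let D₁ be the closed unit disk in ℂ and let Z ⊆ D₁ be a finite set with at most d points, d ≥ 1. Let 0 < δ < 1/(2d) and set δ' = δ/(10d). Then any two points v₁, v₂ ∈ D₁ \ Z^δ belong to the same connected component of D₁ \ Z^{δ'}. -/
/-!
For all but a set of radii of measure at most `2 δ' d = δ / 5`, the circle `‖w‖ = ρ` misses
`Z^{δ'}`, so some such circle with `1 - δ / 2 < ρ ≤ 1` lies in `D₁ \ Z^{δ'}`, and it suffices to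
join every `v ∈ D₁ \ Z^δ` to it by a segment in `D₁ \ Z^{δ'}`. If `‖v‖ > ρ`, the radial segment
has length `< δ / 2`. If `‖v‖ ≤ ρ`, the line through `v` in direction `θ` stays at distance at
least `dist v z * |sin (arg (z - v) - θ)|` from `z`; by Jordan's inequality and a second measure
argument, now on `θ`, some direction has `|sin (arg (z - v) - θ)| > 1 / (10 d)` for every `z ∈ Z`.
-/

open Real Set Metric MeasureTheory

lemma exists_mem_Ioc_forall_lt_abs_sub (s : Finset ℝ) {a b ε : ℝ} (hε : 0 ≤ ε)
    (h : 2 * ε * s.card < b - a) : ∃ x ∈ Ioc a b, ∀ y ∈ s, ε < |x - y| := by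
  by_contra! hcover
  have hsub : Ioc a b ⊆ ⋃ y ∈ s, closedBall y ε := fun x hx => by
    obtain ⟨y, hy, hxy⟩ := hcover x hx
    exact mem_biUnion hy (by rwa [mem_closedBall, Real.dist_eq])
  have hvol := (measure_mono (μ := volume) hsub).trans (measure_biUnion_finset_le s _)
  simp only [Real.volume_Ioc, Real.volume_closedBall, Finset.sum_const, nsmul_eq_mul] at hvol
  rw [← ENNReal.ofReal_natCast, ← ENNReal.ofReal_mul (by positivity),
    ENNReal.ofReal_le_ofReal_iff (by positivity)] at hvol
  linarith

lemma two_div_pi_mul_abs_sub_round_mul_pi_le_abs_sin (x : ℝ) :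
    2 / π * |x - round (x / π) * π| ≤ |sin x| := by
  set y := x - round (x / π) * π
  have hy : |y| ≤ π / 2 := by
    calc |y| = |x / π - round (x / π)| * π := by
          rw [← abs_of_pos pi_pos, ← abs_mul, abs_of_pos pi_pos]
          congr 1
          field_simp
          ring
      _ ≤ 1 / 2 * π := by gcongr; exact abs_sub_round _
      _ = π / 2 := by ring
  have hsin : |sin x| = |sin y| := by
    rw [sin_sub_int_mul_pi, abs_mul, abs_neg_one_zpow, one_mul]
  rw [hsin, abs_sin_eq_sin_abs_of_abs_le_pi (by linarith [pi_pos])]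
  exact mul_le_sin (abs_nonneg y) hy

open Complex in
lemma dist_mul_abs_sin_le_dist_add_smul_exp (v z : ℂ) (θ t : ℝ) :
    dist v z * |Real.sin (arg (z - v) - θ)| ≤ dist (v + t • exp (θ * I)) z := by
  have hpolar : ‖z - v‖ * exp (arg (z - v) * I) = z - v := norm_mul_exp_arg_mul_I _
  have hrot : exp (θ * I) * exp (↑(arg (z - v) - θ) * I) = exp (arg (z - v) * I) := by
    rw [← Complex.exp_add]; push_cast; ring_nf
  have hdiff : v + t • exp (θ * I) - z =
      exp (θ * I) * (t - ‖z - v‖ * exp (↑(arg (z - v) - θ) * I)) := by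
    rw [real_smul]
    linear_combination hpolar + (‖z - v‖ : ℂ) * hrot
  rw [dist_comm v, Complex.dist_eq, Complex.dist_eq, hdiff, norm_mul, norm_exp_ofReal_mul_I,
    one_mul]
  refine le_of_eq_of_le ?_ (abs_im_le_norm _)
  rw [Complex.sub_im, Complex.ofReal_im, zero_sub, abs_neg, Complex.im_ofReal_mul,
    Complex.exp_ofReal_mul_I_im, abs_mul, abs_norm]

lemma exists_forall_div_lt_dist_add_smul_exp (Z : Finset ℂ) (v : ℂ) {δ c : ℝ}
    (hc : 4 * Z.card < c) (hv : ∀ z ∈ Z, δ < dist v z) :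
    ∃ θ : ℝ, ∀ z ∈ Z, ∀ t : ℝ, δ / c < dist (v + t • Complex.exp (θ * Complex.I)) z := by
  have hc0 : 0 < c := lt_of_le_of_lt (by positivity) hc
  -- for `θ ∈ (0, π]` the integer nearest to `(arg (z - v) - θ) / π` lies in `[-2, 1]`
  set s := (Z ×ˢ Finset.Icc (-2 : ℤ) 1).image fun p => Complex.arg (p.1 - v) - p.2 * π
  have hs : (s.card : ℝ) ≤ 4 * Z.card := by
    exact_mod_cast Finset.card_image_le.trans_eq (by simp [mul_comm])
  have hmeasure : 2 * (π / (2 * c)) * s.card < π - 0 := by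
    calc 2 * (π / (2 * c)) * s.card = π * (s.card / c) := by field_simp
      _ < π * 1 := by gcongr; exact (div_lt_one hc0).2 (hs.trans_lt hc)
      _ = π - 0 := by ring
  obtain ⟨θ, hθ, hθs⟩ := exists_mem_Ioc_forall_lt_abs_sub s (by positivity) hmeasure
  refine ⟨θ, fun z hz t => ?_⟩
  set y := Complex.arg (z - v) - θ
  set k := round (y / π)
  have hk : k ∈ Finset.Icc (-2 : ℤ) 1 := by
    have hround := abs_le.1 (abs_sub_round (y / π))
    have hlo : -2 < y / π := by
      rw [lt_div_iff₀ pi_pos]; linarith [Complex.neg_pi_lt_arg (z - v), hθ.2]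
    have hhi : y / π < 1 := by
      rw [div_lt_iff₀ pi_pos]; linarith [Complex.arg_le_pi (z - v), hθ.1]
    have h1 : (-3 : ℤ) < k := by exact_mod_cast (by linarith : (-3 : ℝ) < k)
    have h2 : k < 2 := by exact_mod_cast (by linarith : (k : ℝ) < 2)
    exact Finset.mem_Icc.2 ⟨by omega, by omega⟩
  have hyk : π / (2 * c) < |y - k * π| := by
    have := hθs _ (Finset.mem_image_of_mem _ (Finset.mk_mem_product hz hk))
    rwa [abs_sub_comm, show Complex.arg (z - v) - k * π - θ = y - k * π by ring] at this
  have hsin : 1 / c < |Real.sin y| :=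
    calc 1 / c = 2 / π * (π / (2 * c)) := by field_simp
      _ < 2 / π * |y - k * π| := by gcongr
      _ ≤ |Real.sin y| := two_div_pi_mul_abs_sub_round_mul_pi_le_abs_sin y
  have hvz := hv z hz
  calc δ / c < dist v z * |Real.sin y| := by
        rw [div_eq_mul_one_div]
        nlinarith [mul_nonneg (dist_nonneg (x := v) (y := z)) (sub_nonneg.2 hsin.le),
          mul_pos (sub_pos.2 hvz) (one_div_pos.2 hc0)]
    _ ≤ _ := dist_mul_abs_sin_le_dist_add_smul_exp v z θ t

section NormedSpace

variable {E : Type*} [NormedAddCommGroup E] [NormedSpace ℝ E]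

lemma exists_nonneg_norm_add_smul_eq {v u : E} {ρ : ℝ} (hv : ‖v‖ ≤ ρ) (hu : ‖u‖ = 1) :
    ∃ τ : ℝ, 0 ≤ τ ∧ ‖v + τ • u‖ = ρ := by
  have hρ : 0 ≤ ρ := (norm_nonneg v).trans hv
  have hcont : ContinuousOn (fun t : ℝ => ‖v + t • u‖) (Icc 0 (2 * ρ)) := by fun_prop
  have hfar : ρ ≤ ‖v + (2 * ρ) • u‖ := by
    have := norm_sub_norm_le ((2 * ρ) • u) (-v)
    rw [norm_smul, hu, norm_neg, sub_neg_eq_add, add_comm, Real.norm_of_nonneg (by positivity)]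
      at this
    linarith
  obtain ⟨τ, hτ, hτρ⟩ := intermediate_value_Icc (by positivity) hcont ⟨by simpa using hv, hfar⟩
  exact ⟨τ, hτ.1, hτρ⟩

lemma exists_mem_sphere_segment_subset_closedBall_inter_closedBall {v : E} {ρ : ℝ}
    (hρ : 0 ≤ ρ) (hvρ : ρ ≤ ‖v‖) :
    ∃ w ∈ sphere (0 : E) ρ, segment ℝ v w ⊆ closedBall 0 ‖v‖ ∩ closedBall v (‖v‖ - ρ) := by
  rcases eq_or_ne v 0 with rfl | hv
  · obtain rfl : ρ = 0 := le_antisymm (by simpa using hvρ) hρ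
    exact ⟨0, by simp, by simp⟩
  have hv' : 0 < ‖v‖ := norm_pos_iff.2 hv
  have hw : ‖(ρ / ‖v‖) • v‖ = ρ := by
    rw [norm_smul, Real.norm_of_nonneg (by positivity), div_mul_cancel₀ _ hv'.ne']
  refine ⟨(ρ / ‖v‖) • v, mem_sphere_zero_iff_norm.2 hw,
    ((convex_closedBall _ _).inter (convex_closedBall _ _)).segment_subset
      ⟨mem_closedBall_zero_iff.2 le_rfl, mem_closedBall_self (by linarith)⟩
      ⟨mem_closedBall_zero_iff.2 (hw.trans_le hvρ), ?_⟩⟩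
  rw [mem_closedBall, dist_eq_norm]
  refine le_of_eq ?_
  calc ‖(ρ / ‖v‖) • v - v‖ = ‖(1 - ρ / ‖v‖) • v‖ := by
        rw [← norm_neg, neg_sub, sub_smul, one_smul]
    _ = ‖v‖ - ρ := by
      rw [norm_smul, Real.norm_of_nonneg (sub_nonneg.2 ((div_le_one hv').2 hvρ)), sub_mul,
        one_mul, div_mul_cancel₀ _ hv'.ne']

end NormedSpace

lemma mem_diff_biUnion_closedBall_iff {α : Type*} [PseudoMetricSpace α] {s : Set α}
    {Z : Finset α} {r : ℝ} {x : α} :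
    x ∈ s \ ⋃ z ∈ Z, closedBall z r ↔ x ∈ s ∧ ∀ z ∈ Z, r < dist x z := by
  simp [not_le]

lemma exists_mem_Ioc_sphere_subset_closedBall_diff_biUnion {E : Type*}
    [SeminormedAddCommGroup E] (Z : Finset E) {a b ε : ℝ} (hε : 0 ≤ ε)
    (h : 2 * ε * Z.card < b - a) :
    ∃ ρ ∈ Ioc a b, sphere (0 : E) ρ ⊆ closedBall 0 b \ ⋃ z ∈ Z, closedBall z ε := by
  have hcard : 2 * ε * (Z.image (‖·‖)).card < b - a :=
    lt_of_le_of_lt (by gcongr; exact Finset.card_image_le) h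
  obtain ⟨ρ, hρ, hρZ⟩ := exists_mem_Ioc_forall_lt_abs_sub _ hε hcard
  refine ⟨ρ, hρ, fun w hw => mem_diff_biUnion_closedBall_iff.2 ⟨?_, fun z hz => ?_⟩⟩
  · rw [mem_sphere_zero_iff_norm] at hw
    exact mem_closedBall_zero_iff.2 (hw ▸ hρ.2)
  · calc ε < |ρ - ‖z‖| := hρZ _ (Finset.mem_image_of_mem _ hz)
      _ ≤ dist w z := by
        rw [← mem_sphere_zero_iff_norm.1 hw, dist_eq_norm]
        exact abs_norm_sub_norm_le w z

lemma exists_mem_sphere_segment_subset_of_norm_le (Z : Finset ℂ) {v : ℂ} {δ c ρ : ℝ}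
    (hc : 4 * Z.card < c) (hvρ : ‖v‖ ≤ ρ) (hvZ : ∀ z ∈ Z, δ < dist v z) :
    ∃ w ∈ sphere (0 : ℂ) ρ, segment ℝ v w ⊆ closedBall 0 ρ \ ⋃ z ∈ Z, closedBall z (δ / c) := by
  obtain ⟨θ, hθ⟩ := exists_forall_div_lt_dist_add_smul_exp Z v hc hvZ
  obtain ⟨τ, -, hτ⟩ := exists_nonneg_norm_add_smul_eq hvρ (Complex.norm_exp_ofReal_mul_I θ)
  have hw : v + τ • Complex.exp (θ * Complex.I) ∈ sphere (0 : ℂ) ρ :=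
    mem_sphere_zero_iff_norm.2 hτ
  refine ⟨_, hw, fun x hx => mem_diff_biUnion_closedBall_iff.2
    ⟨(convex_closedBall 0 ρ).segment_subset (mem_closedBall_zero_iff.2 hvρ)
      (sphere_subset_closedBall hw) hx, fun z hz => ?_⟩⟩
  rw [segment_eq_image', mem_image] at hx
  obtain ⟨s, -, rfl⟩ := hx
  rw [add_sub_cancel_left, smul_smul]
  exact hθ z hz (s * τ)

lemma exists_mem_sphere_segment_subset {d : ℕ} (hd : 1 ≤ d) {Z : Finset ℂ} (hZ : Z.card ≤ d)
    {δ ρ : ℝ} (hδ : 0 < δ) (hρ0 : 0 ≤ ρ) (hρ : 1 - δ / 2 < ρ) (hρ1 : ρ ≤ 1) {v : ℂ}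
    (hv : v ∈ closedBall 0 1 \ ⋃ z ∈ Z, closedBall z δ) :
    ∃ w ∈ sphere (0 : ℂ) ρ,
      segment ℝ v w ⊆ closedBall 0 1 \ ⋃ z ∈ Z, closedBall z (δ / (10 * d)) := by
  rw [mem_diff_biUnion_closedBall_iff, mem_closedBall_zero_iff] at hv
  have hd' : (1 : ℝ) ≤ d := Nat.one_le_cast.2 hd
  rcases le_or_gt ‖v‖ ρ with hvρ | hvρ
  · have hc : 4 * (Z.card : ℝ) < 10 * d := by
      have : (Z.card : ℝ) ≤ d := by exact_mod_cast hZ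
      linarith
    obtain ⟨w, hw, hseg⟩ := exists_mem_sphere_segment_subset_of_norm_le Z hc hvρ hv.2
    exact ⟨w, hw, hseg.trans (sdiff_subset_sdiff_left (closedBall_subset_closedBall hρ1))⟩
  · obtain ⟨w, hw, hseg⟩ := exists_mem_sphere_segment_subset_closedBall_inter_closedBall hρ0 hvρ.le
    refine ⟨w, hw, fun x hx => mem_diff_biUnion_closedBall_iff.2 ?_⟩
    obtain ⟨hx0, hxv⟩ := hseg hx
    rw [mem_closedBall_zero_iff] at hx0
    rw [mem_closedBall] at hxv
    refine ⟨mem_closedBall_zero_iff.2 (hx0.trans hv.1), fun z hz => ?_⟩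
    -- `x` lies within `1 - ρ < δ / 2` of `v`, which is `δ`-far from `z`
    have hδ' : δ / (10 * d) ≤ δ / 2 := div_le_div_of_nonneg_left hδ.le two_pos (by linarith)
    linarith [dist_triangle_left v z x, hv.2 z hz]

theorem stmt2_general (d : ℕ) (hd : 1 ≤ d) (Z : Finset ℂ) (hZcard : Z.card ≤ d)
    (δ : ℝ) (hδ : 0 < δ) (hδ' : δ < 1 / (2 * d))
    (v₁ v₂ : ℂ)
    (hv₁ : v₁ ∈ Metric.closedBall (0 : ℂ) 1 \ ⋃ z ∈ Z, Metric.closedBall z δ)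
    (hv₂ : v₂ ∈ Metric.closedBall (0 : ℂ) 1 \ ⋃ z ∈ Z, Metric.closedBall z δ) :
    v₂ ∈ connectedComponentIn
        (Metric.closedBall (0 : ℂ) 1 \ ⋃ z ∈ Z, Metric.closedBall z (δ / (10 * d))) v₁ := by
  have hd' : (1 : ℝ) ≤ d := Nat.one_le_cast.2 hd
  have hwidth : 2 * (δ / (10 * d)) * Z.card < 1 - (1 - δ / 2) := by
    have : (Z.card : ℝ) ≤ d := by exact_mod_cast hZcard
    calc 2 * (δ / (10 * d)) * Z.card ≤ 2 * (δ / (10 * d)) * d := by gcongr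
      _ < 1 - (1 - δ / 2) := by field_simp; linarith
  obtain ⟨ρ, ⟨hρ, hρ1⟩, hsphere⟩ :=
    exists_mem_Ioc_sphere_subset_closedBall_diff_biUnion Z (by positivity) hwidth
  have hρ0 : 0 ≤ ρ := by
    have : 1 / (2 * (d : ℝ)) ≤ 1 / 2 := by gcongr; linarith
    linarith
  obtain ⟨w₁, hw₁, hseg₁⟩ := exists_mem_sphere_segment_subset hd hZcard hδ hρ0 hρ hρ1 hv₁
  obtain ⟨w₂, hw₂, hseg₂⟩ := exists_mem_sphere_segment_subset hd hZcard hδ hρ0 hρ hρ1 hv₂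
  have hpre : IsPreconnected (segment ℝ v₁ w₁ ∪ (sphere 0 ρ ∪ segment ℝ v₂ w₂)) := by
    refine (convex_segment v₁ w₁).isPreconnected.union w₁ (right_mem_segment ..) (.inl hw₁) ?_
    refine (isPreconnected_sphere ?_ 0 ρ).union w₂ hw₂ (right_mem_segment ..)
      (convex_segment v₂ w₂).isPreconnected
    rw [Complex.rank_real_complex]
    exact Nat.one_lt_ofNat
  exact hpre.subset_connectedComponentIn (.inl (left_mem_segment ..))
    (union_subset hseg₁ (union_subset hsphere hseg₂)) (.inr (.inr (left_mem_segment ..)))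

theorem stmt2 (d : ℕ) (hd : 1 ≤ d) (Z : Finset ℂ) (hZcard : Z.card ≤ d)
    (hZ : (Z : Set ℂ) ⊆ Metric.closedBall (0 : ℂ) 1)
    (δ : ℝ) (hδ : 0 < δ) (hδ' : δ < 1 / (2 * d))
    (v₁ v₂ : ℂ)
    (hv₁ : v₁ ∈ Metric.closedBall (0 : ℂ) 1 \ ⋃ z ∈ Z, Metric.closedBall z δ)
    (hv₂ : v₂ ∈ Metric.closedBall (0 : ℂ) 1 \ ⋃ z ∈ Z, Metric.closedBall z δ) :
    v₂ ∈ connectedComponentIn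
        (Metric.closedBall (0 : ℂ) 1 \ ⋃ z ∈ Z, Metric.closedBall z (δ / (10 * d))) v₁ :=
  stmt2_general d hd Z hZcard δ hδ hδ' v₁ v₂ hv₁ hv₂
end

section
/- Let z₁,…,z_d be d points in ℂ (d ≥ 1) and let r > 0. Then every connected component of the union of the closed disks of radius r centered at z₁,…,z_d has diameter at most 2·d·r. -/
/-!
Join two centres by an edge when they are at distance at most `2r`, as the centres of two meeting
closed balls of radius `r` are. A preconnected set covered by the balls stays inside the balls of
one connected component of this graph, because the union of those balls and the union of the
remaining ones are disjoint closed sets. Two vertices of a component are joined by a path with at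
most `d - 1` edges, so any two points of the set are within `r + 2r(d - 1) + r = 2dr` of each other.
-/

open Set SimpleGraph

namespace Metric

variable {X ι : Type*} [PseudoMetricSpace X]

def distLEGraph (z : ι → X) (c : ℝ) : SimpleGraph ι where
  Adj i j := i ≠ j ∧ dist (z i) (z j) ≤ c
  symm := ⟨fun i j h => ⟨h.1.symm, dist_comm (z i) (z j) ▸ h.2⟩⟩
  loopless := ⟨fun _ h => h.1 rfl⟩

variable {z : ι → X} {c : ℝ} {i j : ι}

@[simp]
theorem distLEGraph_adj : (distLEGraph z c).Adj i j ↔ i ≠ j ∧ dist (z i) (z j) ≤ c := Iff.rfl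

namespace distLEGraph

theorem dist_le_mul_length (p : (distLEGraph z c).Walk i j) :
    dist (z i) (z j) ≤ c * p.length := by
  induction p with
  | nil => simp
  | @cons i k j hik p ih =>
    calc dist (z i) (z j) ≤ dist (z i) (z k) + dist (z k) (z j) := dist_triangle _ _ _
      _ ≤ c + c * p.length := add_le_add (distLEGraph_adj.1 hik).2 ih
      _ = c * (p.cons hik).length := by rw [Walk.length_cons, Nat.cast_succ]; ring

theorem dist_le_of_reachable [Fintype ι] (hc : 0 ≤ c) (h : (distLEGraph z c).Reachable i j) :
    dist (z i) (z j) ≤ c * (Fintype.card ι - 1) := by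
  classical
  obtain ⟨p⟩ := h
  have hlen : (p.toPath.1.length : ℝ) ≤ Fintype.card ι - 1 := by
    have := p.toPath.2.length_lt
    rw [le_sub_iff_add_le]
    exact_mod_cast this
  calc dist (z i) (z j) ≤ c * p.toPath.1.length := dist_le_mul_length _
    _ ≤ c * (Fintype.card ι - 1) := by gcongr

end distLEGraph

variable {r : ℝ} {C : Set X}

theorem disjoint_biUnion_closedBall_reachable (i : ι) :
    Disjoint (⋃ j ∈ {j | (distLEGraph z (2 * r)).Reachable i j}, closedBall (z j) r)
      (⋃ k ∈ {j | (distLEGraph z (2 * r)).Reachable i j}ᶜ, closedBall (z k) r) := by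
  refine Set.disjoint_left.2 fun w hw hw' => ?_
  obtain ⟨j, hj, hwj⟩ := mem_iUnion₂.1 hw
  obtain ⟨k, hk, hwk⟩ := mem_iUnion₂.1 hw'
  refine hk ?_
  obtain rfl | hjk := eq_or_ne j k
  · exact hj
  have hdist : dist (z j) (z k) ≤ 2 * r := by
    calc dist (z j) (z k) ≤ dist w (z j) + dist w (z k) := dist_triangle_left _ _ _
      _ ≤ r + r := add_le_add (mem_closedBall.1 hwj) (mem_closedBall.1 hwk)
      _ = 2 * r := by ring
  exact hj.trans (Adj.reachable ⟨hjk, hdist⟩)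

theorem _root_.IsPreconnected.subset_biUnion_closedBall_reachable [Finite ι]
    (hC : IsPreconnected C) (hCsub : C ⊆ ⋃ i, closedBall (z i) r) {a : X} (ha : a ∈ C) {i : ι}
    (hai : a ∈ closedBall (z i) r) :
    C ⊆ ⋃ j ∈ {j | (distLEGraph z (2 * r)).Reachable i j}, closedBall (z j) r := by
  set T := {j | (distLEGraph z (2 * r)).Reachable i j}
  have hdisj := disjoint_biUnion_closedBall_reachable (z := z) (r := r) i
  have hcover : C ⊆ (⋃ j ∈ T, closedBall (z j) r) ∪ ⋃ k ∈ Tᶜ, closedBall (z k) r := by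
    intro w hw
    obtain ⟨j, hwj⟩ := mem_iUnion.1 (hCsub hw)
    by_cases hj : j ∈ T
    · exact Or.inl (mem_biUnion hj hwj)
    · exact Or.inr (mem_biUnion hj hwj)
  have hclosed (S : Set ι) : IsClosed (⋃ j ∈ S, closedBall (z j) r) :=
    S.toFinite.isClosed_biUnion fun _ _ => isClosed_closedBall
  refine (isPreconnected_iff_subset_of_disjoint_closed.1 hC _ _ (hclosed T) (hclosed Tᶜ) hcover
    (by rw [hdisj.inter_eq, inter_empty])).resolve_right fun hCT => ?_
  exact Set.disjoint_left.1 hdisj (mem_biUnion (Reachable.refl i) hai) (hCT ha)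

theorem _root_.IsPreconnected.diam_le_of_subset_iUnion_closedBall [Fintype ι]
    (hC : IsPreconnected C) (hCsub : C ⊆ ⋃ i, closedBall (z i) r) (hr : 0 ≤ r) :
    diam C ≤ 2 * Fintype.card ι * r := by
  refine diam_le_of_forall_dist_le (by positivity) fun a ha b hb => ?_
  obtain ⟨i, hai⟩ := mem_iUnion.1 (hCsub ha)
  obtain ⟨j, hij, hbj⟩ := mem_iUnion₂.1 (hC.subset_biUnion_closedBall_reachable hCsub ha hai hb)
  calc dist a b ≤ dist a (z i) + dist (z i) (z j) + dist (z j) b := dist_triangle4 _ _ _ _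
    _ ≤ r + 2 * r * (Fintype.card ι - 1) + r := by
      gcongr
      · exact mem_closedBall.1 hai
      · exact distLEGraph.dist_le_of_reachable (by positivity) hij
      · exact mem_closedBall'.1 hbj
    _ = 2 * Fintype.card ι * r := by ring

end Metric

theorem stmt3_general (d : ℕ) (z : Fin d → ℂ) (r : ℝ)
    (x : ℂ) (hx : x ∈ ⋃ s, Metric.closedBall (z s) r) :
    Metric.diam (connectedComponentIn (⋃ s, Metric.closedBall (z s) r) x) ≤ 2 * d * r := by
  obtain ⟨s, hxs⟩ := Set.mem_iUnion.1 hx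
  have hr : 0 ≤ r := Metric.nonempty_closedBall.1 ⟨x, hxs⟩
  simpa using isPreconnected_connectedComponentIn.diam_le_of_subset_iUnion_closedBall
    (z := z) (connectedComponentIn_subset _ x) hr

theorem stmt3 (d : ℕ) (hd : 1 ≤ d) (z : Fin d → ℂ) (r : ℝ) (hr : 0 < r)
    (x : ℂ) (hx : x ∈ ⋃ s, Metric.closedBall (z s) r) :
    Metric.diam (connectedComponentIn (⋃ s, Metric.closedBall (z s) r) x) ≤ 2 * d * r :=
  stmt3_general d z r x hx
end

section
/- Let n ≥ 1, d ≥ 1. There exists a constant c₃ > 0 depending only on n and d such that: for every normalized polynomial P of degree d in ℂⁿ, every point v₁ ∈ Q, and every closed ball B ⊆ Q of radius ρ(n,d) = 1/(4(16(d+n))^n), there exists a point z₁ ∈ B with z₁ ≠ v₁ such that ‖P_L‖ ≥ c₃, where P_L is the univariate polynomial t ↦ P(v₁ + t·(z₁ − v₁)/‖z₁ − v₁‖) obtained by restricting P to the complex line L through v₁ and z₁. -/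
noncomputable section

def unitCube (n : ℕ) : Set (EuclideanSpace ℂ (Fin n)) :=
  {z | ∀ i, (z i).re ∈ Set.Icc (0:ℝ) 1 ∧ (z i).im ∈ Set.Icc (0:ℝ) 1}

def mvNorm {n : ℕ} (P : MvPolynomial (Fin n) ℂ) : ℝ :=
  ∑ α ∈ P.support, ‖P.coeff α‖

def zeroSet {n : ℕ} (P : MvPolynomial (Fin n) ℂ) : Set (EuclideanSpace ℂ (Fin n)) :=
  {z | MvPolynomial.eval (fun i => z i) P = 0}

def Qr (n : ℕ) (H : Set (EuclideanSpace ℂ (Fin n))) (r : ℝ) : Set (EuclideanSpace ℂ (Fin n)) :=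
  unitCube n \ {z | Metric.infDist z H ≤ r}

def polyNorm (p : Polynomial ℂ) : ℝ := ∑ k ∈ p.support, ‖p.coeff k‖

def lineRestrict {n : ℕ} (P : MvPolynomial (Fin n) ℂ) (b w : EuclideanSpace ℂ (Fin n)) :
    Polynomial ℂ :=
  MvPolynomial.aeval (fun i => Polynomial.C (b i) + Polynomial.C (w i) * Polynomial.X) P

def lineSet {n : ℕ} (b w : EuclideanSpace ℂ (Fin n)) : Set (EuclideanSpace ℂ (Fin n)) :=
  {z | ∃ t : ℂ, z = b + t • w}

/-!
Along the line through `v₁` and `z₁`, parametrised by arc length, `P` restricts to a polynomial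
`P_L` of degree at most `d` with `P_L(‖z₁ - v₁‖) = P(z₁)`; as `‖z₁ - v₁‖` is at most the diameter
`D` of the cube, `|P(z₁)| ≤ ‖P_L‖ · max 1 D ^ d`. So it suffices to find in the ball a point
`z₁ ≠ v₁` at which `|P|` is bounded below uniformly in `P`, `v₁` and the ball.

A nonzero polynomial of degree at most `d` in each variable cannot vanish on a product grid with
`d + 1` points per coordinate. Hence the sum of `|P|` over a translate `x + G` of such a grid is a
continuous, positive function of the normalised coefficients of `P` and of `x`, so by compactness
it is bounded below, and some grid point carries a fixed fraction of the bound. Two disjoint grids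
inside the ball give two distinct candidates, one of which differs from `v₁`.
-/

open MvPolynomial Finset

theorem MvPolynomial.natDegree_aeval_le {σ R : Type*} [CommSemiring R] (P : MvPolynomial σ R)
    {g : σ → Polynomial R} {D : ℕ} (hg : ∀ i, (g i).natDegree ≤ D) :
    (aeval g P).natDegree ≤ P.totalDegree * D := by
  rw [aeval_eq_eval₂Hom, coe_eval₂Hom, eval₂_eq]
  refine Polynomial.natDegree_sum_le_of_forall_le _ _ fun α hα => ?_
  refine (Polynomial.natDegree_C_mul_le _ _).trans ((Polynomial.natDegree_prod_le _ _).trans ?_)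
  calc ∑ i ∈ α.support, (g i ^ α i).natDegree
      ≤ ∑ i ∈ α.support, α i * D := sum_le_sum fun i _ => Polynomial.natDegree_pow_le_of_le _ (hg i)
    _ = (α.sum fun _ e => e) * D := by rw [← sum_mul]; rfl
    _ ≤ P.totalDegree * D := Nat.mul_le_mul_right _ (le_totalDegree hα)

theorem natDegree_lineRestrict_le {n : ℕ} (P : MvPolynomial (Fin n) ℂ)
    (b w : EuclideanSpace ℂ (Fin n)) : (lineRestrict P b w).natDegree ≤ P.totalDegree := by
  simpa only [lineRestrict, mul_one] using P.natDegree_aeval_le (D := 1) fun i => by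
    rw [add_comm]
    exact Polynomial.natDegree_linear_le

theorem eval_lineRestrict {n : ℕ} (P : MvPolynomial (Fin n) ℂ) (b w : EuclideanSpace ℂ (Fin n))
    (t : ℂ) : (lineRestrict P b w).eval t = eval (fun i => b i + w i * t) P := by
  rw [lineRestrict, ← Polynomial.coe_aeval_eq_eval, comp_aeval_apply]
  simp

theorem Polynomial.norm_eval_le_polyNorm_mul_pow {p : Polynomial ℂ} {D : ℕ} (hp : p.natDegree ≤ D)
    {t : ℂ} {M : ℝ} (hM : 1 ≤ M) (ht : ‖t‖ ≤ M) : ‖p.eval t‖ ≤ polyNorm p * M ^ D := by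
  rw [eval_eq_sum, sum_def, polyNorm, sum_mul]
  refine (norm_sum_le _ _).trans (sum_le_sum fun k hk => ?_)
  rw [norm_mul, norm_pow]
  gcongr
  calc ‖t‖ ^ k ≤ M ^ k := by gcongr
    _ ≤ M ^ D := pow_le_pow_right₀ hM ((le_natDegree_of_mem_supp k hk).trans hp)

theorem norm_eval_le_polyNorm_lineRestrict {n : ℕ} (P : MvPolynomial (Fin n) ℂ)
    {z v : EuclideanSpace ℂ (Fin n)} (hzv : z ≠ v) {M : ℝ} (hM : 1 ≤ M) (hdist : dist z v ≤ M) :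
    ‖eval (fun i => z i) P‖ ≤
      polyNorm (lineRestrict P v ((‖z - v‖⁻¹ : ℝ) • (z - v))) * M ^ P.totalDegree := by
  have hr : (‖z - v‖ : ℂ) ≠ 0 := by simpa [sub_eq_zero] using hzv
  have heval : (lineRestrict P v ((‖z - v‖⁻¹ : ℝ) • (z - v))).eval (‖z - v‖ : ℂ) =
      eval (fun i => z i) P := by
    rw [eval_lineRestrict]
    congr 2 with i
    simp [Complex.real_smul]
    field_simp
    ring
  rw [← heval]
  refine Polynomial.norm_eval_le_polyNorm_mul_pow (natDegree_lineRestrict_le _ _ _) hM ?_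
  rwa [Complex.norm_real, norm_norm, ← dist_eq_norm]

namespace MvPolynomial

variable {σ R : Type*} [CommSemiring R] (S : Finset (σ →₀ ℕ))

def ofCoeffs (c : S → R) : MvPolynomial σ R :=
  ∑ α : S, monomial (α : σ →₀ ℕ) (c α)

theorem coeff_ofCoeffs (c : S → R) (α : S) : (ofCoeffs S c).coeff α = c α := by
  classical
  rw [ofCoeffs, coeff_sum, sum_eq_single α (fun β _ hβ => ?_) (by simp)]
  · simp
  · rw [coeff_monomial, if_neg (Subtype.coe_injective.ne hβ)]

theorem support_ofCoeffs_subset (c : S → R) : (ofCoeffs S c).support ⊆ S := by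
  classical
  refine (support_sum).trans (biUnion_subset.mpr fun α _ => ?_)
  exact (support_monomial_subset).trans (singleton_subset_iff.mpr α.2)

theorem ofCoeffs_coeff {P : MvPolynomial σ R} (hP : P.support ⊆ S) :
    ofCoeffs S (fun α => P.coeff α) = P := by
  ext β
  by_cases hβ : β ∈ S
  · exact coeff_ofCoeffs S _ ⟨β, hβ⟩
  · rw [notMem_support_iff.mp fun h => hβ (hP h),
      notMem_support_iff.mp fun h => hβ (support_ofCoeffs_subset S _ h)]

theorem continuous_eval_ofCoeffs [TopologicalSpace R] [IsTopologicalSemiring R] [Fintype σ] :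
    Continuous fun p : (S → R) × (σ → R) => eval p.2 (ofCoeffs S p.1) := by
  simp only [ofCoeffs, map_sum, eval_monomial, Finsupp.prod]
  fun_prop

section Grid

variable [Fintype σ] [DecidableEq σ]

theorem sum_norm_eval_add_pos {𝕜 : Type*} [NormedField 𝕜] {P : MvPolynomial σ 𝕜} (hP : P ≠ 0)
    {T : σ → Finset 𝕜} (hT : ∀ i, P.degreeOf i < #(T i)) (x : σ → 𝕜) :
    0 < ∑ y ∈ Fintype.piFinset T, ‖eval (x + y) P‖ := by
  classical
  refine (sum_nonneg fun _ _ => norm_nonneg _).lt_of_ne fun h => hP ?_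
  have hzero := (sum_eq_zero_iff_of_nonneg fun _ _ => norm_nonneg _).mp h.symm
  refine eq_zero_of_eval_zero_at_prod_finset P (fun i => (T i).image (x i + ·))
    (fun i => ?_) fun z hz => ?_
  · rw [card_image_of_injective _ (add_right_injective (x i))]
    exact hT i
  · have hy : z - x ∈ Fintype.piFinset T := Fintype.mem_piFinset.mpr fun i => by
      obtain ⟨t, ht, hzt⟩ := mem_image.mp (hz i)
      simp [← hzt, ht]
    simpa using hzero _ hy

variable (σ) in
def degreeBox (d : ℕ) : Finset (σ →₀ ℕ) :=
  Iic (Finsupp.equivFunOnFinite.symm fun _ => d)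

theorem mem_degreeBox {d : ℕ} {α : σ →₀ ℕ} : α ∈ degreeBox σ d ↔ ∀ i, α i ≤ d := by
  simp [degreeBox, Finsupp.le_def]

theorem support_subset_degreeBox {d : ℕ} {P : MvPolynomial σ R} (hP : ∀ i, P.degreeOf i ≤ d) :
    P.support ⊆ degreeBox σ d :=
  fun _ hα => mem_degreeBox.mpr fun i => (monomial_le_degreeOf i hα).trans (hP i)

theorem degreeOf_ofCoeffs_lt {d : ℕ} (c : degreeBox σ d → R) (i : σ) :
    (ofCoeffs (degreeBox σ d) c).degreeOf i < d + 1 :=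
  (degreeOf_lt_iff d.succ_pos).mpr fun _ hα =>
    Nat.lt_succ_of_le (mem_degreeBox.mp (support_ofCoeffs_subset _ c hα) i)

end Grid

end MvPolynomial

theorem mvNorm_eq_sum {n : ℕ} {P : MvPolynomial (Fin n) ℂ} {S : Finset (Fin n →₀ ℕ)}
    (hP : P.support ⊆ S) : mvNorm P = ∑ α : S, ‖P.coeff α‖ := by
  rw [mvNorm, sum_coe_sort S fun α => ‖P.coeff α‖]
  exact sum_subset hP fun α _ hα => by rw [notMem_support_iff.mp hα, norm_zero]

theorem isCompact_sum_norm_eq_one {ι : Type*} [Fintype ι] :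
    IsCompact {c : ι → ℂ | ∑ i, ‖c i‖ = 1} := by
  refine (isCompact_univ_pi fun _ => isCompact_closedBall (0 : ℂ) 1).of_isClosed_subset
    (isClosed_eq (by fun_prop) continuous_const) fun c hc i _ => ?_
  rw [Set.mem_ofPred_eq] at hc
  simpa [← hc] using single_le_sum (fun j _ => norm_nonneg (c j)) (mem_univ i)

theorem exists_pos_forall_le_sum_norm_eval_add {n d : ℕ} {T : Fin n → Finset ℂ}
    (hT : ∀ i, d < #(T i)) {K : Set (Fin n → ℂ)} (hK : IsCompact K) :
    ∃ c > 0, ∀ P : MvPolynomial (Fin n) ℂ, (∀ i, P.degreeOf i ≤ d) → mvNorm P = 1 →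
      ∀ x ∈ K, c ≤ ∑ y ∈ Fintype.piFinset T, ‖eval (x + y) P‖ := by
  set S := degreeBox (Fin n) d
  have hcont : Continuous fun p : (S → ℂ) × (Fin n → ℂ) =>
      ∑ y ∈ Fintype.piFinset T, ‖eval (p.2 + y) (ofCoeffs S p.1)‖ :=
    continuous_finsetSum _ fun y _ => ((continuous_eval_ofCoeffs S).comp
      (continuous_fst.prodMk (continuous_snd.add continuous_const) :
        Continuous fun p : (S → ℂ) × (Fin n → ℂ) => (p.1, p.2 + y))).norm
  have hpos : ∀ p ∈ {c : S → ℂ | ∑ α, ‖c α‖ = 1} ×ˢ K,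
      0 < ∑ y ∈ Fintype.piFinset T, ‖eval (p.2 + y) (ofCoeffs S p.1)‖ := by
    rintro ⟨c, x⟩ ⟨hc, -⟩
    have hne : ofCoeffs S c ≠ 0 := fun h0 => by
      simp [← coeff_ofCoeffs S c, h0] at hc
    exact sum_norm_eval_add_pos hne (fun i => (degreeOf_ofCoeffs_lt c i).trans_le (hT i)) x
  obtain ⟨c, hc, hle⟩ :=
    (isCompact_sum_norm_eq_one.prod hK).exists_forall_le' hcont.continuousOn hpos
  refine ⟨c, hc, fun P hPd hP1 x hx => ?_⟩
  have hPS := support_subset_degreeBox hPd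
  have hcoeff : ∑ α : S, ‖P.coeff α‖ = 1 := (mvNorm_eq_sum hPS).symm.trans hP1
  have h := hle (fun α : S => P.coeff (α : Fin n →₀ ℕ), x) ⟨hcoeff, hx⟩
  rwa [ofCoeffs_coeff S hPS] at h

theorem Finset.exists_div_card_le_of_le_sum {ι : Type*} {s : Finset ι} {f : ι → ℝ} {c : ℝ}
    (hc : 0 < c) (h : c ≤ ∑ i ∈ s, f i) : ∃ i ∈ s, c / #s ≤ f i := by
  have hs : s.Nonempty := nonempty_of_sum_ne_zero (hc.trans_le h).ne'
  refine exists_le_of_sum_le hs ?_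
  rwa [sum_const, nsmul_eq_mul, mul_div_cancel₀ _ (by exact_mod_cast hs.card_pos.ne')]

theorem exists_pos_forall_exists_le_norm_eval_add {n d : ℕ} {T : Fin n → Finset ℂ}
    (hT : ∀ i, d < #(T i)) {K : Set (Fin n → ℂ)} (hK : IsCompact K) :
    ∃ c > 0, ∀ P : MvPolynomial (Fin n) ℂ, (∀ i, P.degreeOf i ≤ d) → mvNorm P = 1 →
      ∀ x ∈ K, ∃ y ∈ Fintype.piFinset T, c ≤ ‖eval (x + y) P‖ := by
  obtain ⟨c, hc, hle⟩ := exists_pos_forall_le_sum_norm_eval_add hT hK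
  have hT₀ : 0 < #(Fintype.piFinset T) := card_pos.mpr <| Fintype.piFinset_nonempty.mpr
    fun i => card_pos.mp ((Nat.zero_le d).trans_lt (hT i))
  exact ⟨c / #(Fintype.piFinset T), by positivity, fun P hPd hP1 x hx =>
    exists_div_card_le_of_le_sum hc (hle P hPd hP1 x hx)⟩

theorem isCompact_unitCube (n : ℕ) : IsCompact (unitCube n) := by
  have hcube : unitCube n = WithLp.ofLp ⁻¹' Set.univ.pi fun _ => Set.Icc 0 1 ×ℂ Set.Icc 0 1 := by
    ext z
    simp [unitCube, Complex.mem_reProdIm]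
  rw [hcube]
  exact (PiLp.homeomorph 2 _).isCompact_preimage.mpr
    (isCompact_univ_pi fun _ => isCompact_Icc.reProdIm isCompact_Icc)

theorem EuclideanSpace.norm_le_sqrt_card_mul {ι 𝕜 : Type*} [Fintype ι] [RCLike 𝕜]
    {x : EuclideanSpace 𝕜 ι} {b : ℝ} (hb : 0 ≤ b) (h : ∀ i, ‖x i‖ ≤ b) :
    ‖x‖ ≤ √(Fintype.card ι) * b := by
  rw [EuclideanSpace.norm_eq, ← Real.sqrt_sq hb, ← Real.sqrt_mul (Nat.cast_nonneg _)]
  gcongr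
  calc ∑ i, ‖x i‖ ^ 2 ≤ ∑ _i : ι, b ^ 2 := by gcongr with i; exact h i
    _ = Fintype.card ι * b ^ 2 := by simp

def progression (s : ℝ) (a m : ℕ) : Finset ℂ :=
  (Ico a (a + m)).image fun k : ℕ => (k * s : ℂ)

theorem injective_natCast_mul_ofReal {s : ℝ} (hs : s ≠ 0) :
    Function.Injective fun k : ℕ => (k * s : ℂ) := fun _ _ h =>
  Nat.cast_injective (R := ℂ) (mul_right_cancel₀ (Complex.ofReal_ne_zero.mpr hs) h)

theorem card_progression {s : ℝ} (hs : s ≠ 0) (a m : ℕ) : #(progression s a m) = m := by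
  rw [progression, card_image_of_injective _ (injective_natCast_mul_ofReal hs), Nat.card_Ico,
    Nat.add_sub_cancel_left]

theorem norm_le_of_mem_progression {s : ℝ} (hs : 0 ≤ s) {a m : ℕ} {z : ℂ}
    (hz : z ∈ progression s a m) : ‖z‖ ≤ (a + m) * s := by
  obtain ⟨k, hk, rfl⟩ := mem_image.mp hz
  rw [norm_mul, Complex.norm_natCast, Complex.norm_real, Real.norm_of_nonneg hs]
  gcongr
  exact_mod_cast (mem_Ico.mp hk).2.le

theorem disjoint_progression {s : ℝ} (hs : s ≠ 0) {a b : ℕ} (m m' : ℕ) (hab : a + m ≤ b) :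
    Disjoint (progression s a m) (progression s b m') :=
  (disjoint_image (injective_natCast_mul_ofReal hs)).mpr <|
    disjoint_left.mpr fun k hk hk' => by simp only [mem_Ico] at hk hk'; omega

theorem exists_pos_forall_exists_ne_le_norm_eval {n : ℕ} (hn : 0 < n) (d : ℕ)
    {K : Set (EuclideanSpace ℂ (Fin n))} (hK : IsCompact K) {ρ : ℝ} (hρ : 0 < ρ) :
    ∃ c > 0, ∀ P : MvPolynomial (Fin n) ℂ, (∀ i, P.degreeOf i ≤ d) → mvNorm P = 1 →
      ∀ x ∈ K, ∀ v, ∃ z ∈ Metric.closedBall x ρ, z ≠ v ∧ c ≤ ‖eval (fun i => z i) P‖ := by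
  set s := ρ / (√n * (2 * d + 2)) with hs_def
  have hs : 0 < s := by positivity
  set T : ℕ → Fin n → Finset ℂ := fun a _ => progression s a (d + 1)
  have hball : ∀ x : EuclideanSpace ℂ (Fin n), ∀ a ≤ d + 1, ∀ y ∈ Fintype.piFinset (T a),
      x + WithLp.toLp 2 y ∈ Metric.closedBall x ρ := by
    intro x a ha y hy
    rw [Metric.mem_closedBall, dist_self_add_left]
    calc ‖WithLp.toLp 2 y‖ ≤ √(Fintype.card (Fin n)) * ((2 * d + 2) * s) := by
          refine EuclideanSpace.norm_le_sqrt_card_mul (by positivity) fun i =>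
            (norm_le_of_mem_progression hs.le (Fintype.mem_piFinset.mp hy i)).trans ?_
          have : (a : ℝ) ≤ d + 1 := by exact_mod_cast ha
          exact mul_le_mul_of_nonneg_right (by push_cast; linarith) hs.le
      _ = ρ := by rw [Fintype.card_fin, hs_def]; field_simp
  have hgrid : ∀ a, ∃ c > 0, ∀ P : MvPolynomial (Fin n) ℂ, (∀ i, P.degreeOf i ≤ d) →
      mvNorm P = 1 → ∀ x ∈ K, ∃ y ∈ Fintype.piFinset (T a),
        c ≤ ‖eval (fun i => (x + WithLp.toLp 2 y) i) P‖ := by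
    intro a
    obtain ⟨c, hc, h⟩ := exists_pos_forall_exists_le_norm_eval_add (T := T a)
      (fun _ => d.lt_succ_self.trans_le (card_progression hs.ne' a (d + 1)).ge)
      (hK.image (PiLp.continuous_ofLp 2 _))
    exact ⟨c, hc, fun P hPd hP1 x hx => h P hPd hP1 _ ⟨x, hx, rfl⟩⟩
  obtain ⟨c₀, hc₀, h₀⟩ := hgrid 0
  obtain ⟨c₁, hc₁, h₁⟩ := hgrid (d + 1)
  refine ⟨min c₀ c₁, lt_min hc₀ hc₁, fun P hPd hP1 x hx v => ?_⟩
  obtain ⟨y₀, hy₀, hP₀⟩ := h₀ P hPd hP1 x hx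
  obtain ⟨y₁, hy₁, hP₁⟩ := h₁ P hPd hP1 x hx
  have hne : x + WithLp.toLp 2 y₀ ≠ x + WithLp.toLp 2 y₁ := fun h => by
    have hy : y₀ = y₁ := by simpa using h
    exact disjoint_left.mp (disjoint_progression hs.ne' (d + 1) (d + 1) (zero_add _).le)
      (Fintype.mem_piFinset.mp hy₀ ⟨0, hn⟩) (hy ▸ Fintype.mem_piFinset.mp hy₁ ⟨0, hn⟩)
  by_cases hv : x + WithLp.toLp 2 y₀ = v
  · exact ⟨_, hball x _ le_rfl y₁ hy₁, fun h => hne (hv.trans h.symm), (min_le_right _ _).trans hP₁⟩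
  · exact ⟨_, hball x 0 (Nat.zero_le _) y₀ hy₀, hv, (min_le_left _ _).trans hP₀⟩

theorem stmt7_general (n d : ℕ) (hn : 1 ≤ n) :
    ∃ c₃ : ℝ, 0 < c₃ ∧
      ∀ P : MvPolynomial (Fin n) ℂ, P.totalDegree = d → mvNorm P = 1 →
        ∀ v₁ ∈ unitCube n,
          ∀ x : EuclideanSpace ℂ (Fin n),
            Metric.closedBall x (1 / (4 * (16 * ((d : ℝ) + n)) ^ n)) ⊆ unitCube n →
            ∃ z₁ ∈ Metric.closedBall x (1 / (4 * (16 * ((d : ℝ) + n)) ^ n)), z₁ ≠ v₁ ∧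
              c₃ ≤ polyNorm (lineRestrict P v₁ ((‖z₁ - v₁‖⁻¹ : ℝ) • (z₁ - v₁))) := by
  obtain ⟨D, hD⟩ := Metric.isBounded_iff.mp (isCompact_unitCube n).isBounded
  obtain ⟨c, hc, hP⟩ := exists_pos_forall_exists_ne_le_norm_eval hn d (isCompact_unitCube n)
    (ρ := 1 / (4 * (16 * ((d : ℝ) + n)) ^ n)) (by positivity)
  refine ⟨c / max 1 D ^ d, by positivity, fun P hPd hP1 v hv x hx => ?_⟩
  obtain ⟨z, hz, hzv, hcz⟩ := hP P (fun i => (degreeOf_le_totalDegree P i).trans hPd.le) hP1 x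
    (hx (Metric.mem_closedBall_self (by positivity))) v
  refine ⟨z, hz, hzv, (div_le_iff₀ (by positivity)).mpr ?_⟩
  calc c ≤ ‖eval (fun i => z i) P‖ := hcz
    _ ≤ _ := hPd ▸ norm_eval_le_polyNorm_lineRestrict P hzv (le_max_left _ _)
      ((hD (hx hz) hv).trans (le_max_right _ _))

theorem stmt7 (n d : ℕ) (hn : 1 ≤ n) (hd : 1 ≤ d) :
    ∃ c₃ : ℝ, 0 < c₃ ∧
      ∀ P : MvPolynomial (Fin n) ℂ, P.totalDegree = d → mvNorm P = 1 →
        ∀ v₁ ∈ unitCube n,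
          ∀ x : EuclideanSpace ℂ (Fin n),
            Metric.closedBall x (1 / (4 * (16 * ((d : ℝ) + n)) ^ n)) ⊆ unitCube n →
            ∃ z₁ ∈ Metric.closedBall x (1 / (4 * (16 * ((d : ℝ) + n)) ^ n)), z₁ ≠ v₁ ∧
              c₃ ≤ polyNorm (lineRestrict P v₁ ((‖z₁ - v₁‖⁻¹ : ℝ) • (z₁ - v₁))) :=
  stmt7_general n d hn
end
end

section
/- Let p(t) = γ·∏_{s=1}^{d} (t − t_s) be a univariate complex polynomial of degree d ≥ 1 (γ ≠ 0), and let η = min_{1 ≤ s ≤ d} |t_s|. If η ≤ 1, then |p(0)| ≥ (1/(4(d+1)·48^d))·‖p‖·η^d. -/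
/-!
Since `p(0) = γ ∏ (-t_s)` and the ℓ¹ norm of polynomials is submultiplicative,
`‖p‖ ≤ |γ| ∏ (1 + |t_s|)`. As `0 ≤ η ≤ min (1, |t_s|)`, each factor satisfies
`η (1 + |t_s|) ≤ 2 |t_s|`, whence `‖p‖ η^d ≤ 2^d |p(0)|`, which is much stronger
than the claimed bound.
-/

noncomputable section

open Polynomial Finset

lemma polyNorm_nonneg (p : ℂ[X]) : 0 ≤ polyNorm p :=
  sum_nonneg fun _ _ ↦ norm_nonneg _

lemma polyNorm_eq_sum_of_support_subset {p : ℂ[X]} {s : Finset ℕ} (hs : p.support ⊆ s) :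
    polyNorm p = ∑ k ∈ s, ‖p.coeff k‖ :=
  sum_eq_of_subset (fun _ a ↦ ‖a‖) (fun _ ↦ norm_zero) hs

@[simp]
lemma polyNorm_zero : polyNorm 0 = 0 := by
  simp [polyNorm]

@[simp]
lemma polyNorm_monomial (n : ℕ) (a : ℂ) : polyNorm (monomial n a) = ‖a‖ := by
  rw [polyNorm_eq_sum_of_support_subset (support_monomial_subset n a)]
  simp

@[simp]
lemma polyNorm_C (a : ℂ) : polyNorm (C a) = ‖a‖ := by
  rw [← monomial_zero_left, polyNorm_monomial]

lemma polyNorm_add_le (p q : ℂ[X]) : polyNorm (p + q) ≤ polyNorm p + polyNorm q := by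
  rw [polyNorm_eq_sum_of_support_subset support_add,
    polyNorm_eq_sum_of_support_subset (subset_union_left (s₂ := q.support)),
    polyNorm_eq_sum_of_support_subset (subset_union_right (s₁ := p.support)), ← sum_add_distrib]
  exact sum_le_sum fun k _ ↦ by simpa only [coeff_add] using norm_add_le _ _

lemma polyNorm_sum_le {ι : Type*} (s : Finset ι) (f : ι → ℂ[X]) :
    polyNorm (∑ i ∈ s, f i) ≤ ∑ i ∈ s, polyNorm (f i) :=
  le_sum_of_subadditive polyNorm polyNorm_zero.le polyNorm_add_le s f

lemma polyNorm_mul_le (p q : ℂ[X]) : polyNorm (p * q) ≤ polyNorm p * polyNorm q := by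
  rw [mul_eq_sum_sum]
  calc polyNorm (∑ i ∈ p.support, q.sum fun j a ↦ monomial (i + j) (p.coeff i * a))
      ≤ ∑ i ∈ p.support, ∑ j ∈ q.support,
          polyNorm (monomial (i + j) (p.coeff i * q.coeff j)) :=
        (polyNorm_sum_le _ _).trans (sum_le_sum fun i _ ↦ polyNorm_sum_le _ _)
    _ = polyNorm p * polyNorm q := by
        simp only [polyNorm_monomial, norm_mul]
        exact (sum_mul_sum _ _ _ _).symm

lemma polyNorm_prod_le {ι : Type*} (s : Finset ι) (f : ι → ℂ[X]) :
    polyNorm (∏ i ∈ s, f i) ≤ ∏ i ∈ s, polyNorm (f i) :=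
  le_prod_of_submultiplicative_of_nonneg polyNorm polyNorm_nonneg
    (by rw [← C_1, polyNorm_C, norm_one]) polyNorm_mul_le s f

lemma polyNorm_X_sub_C (a : ℂ) : polyNorm (X - C a) = 1 + ‖a‖ := by
  rw [polyNorm_eq_sum_of_support_subset
    (supp_subset_range (Nat.lt_succ_of_le (natDegree_X_sub_C_le a)))]
  simp [sum_range_succ, add_comm]

lemma mul_one_add_le_two_mul {η r : ℝ} (hη0 : 0 ≤ η) (hη1 : η ≤ 1) (hηr : η ≤ r) :
    η * (1 + r) ≤ 2 * r := by
  nlinarith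

lemma polyNorm_C_mul_prod_X_sub_C_mul_pow_le {ι : Type*} [Fintype ι] (γ : ℂ) (t : ι → ℂ)
    {η : ℝ} (hη0 : 0 ≤ η) (hη1 : η ≤ 1) (hη : ∀ s, η ≤ ‖t s‖) :
    polyNorm (C γ * ∏ s, (X - C (t s))) * η ^ Fintype.card ι ≤
      2 ^ Fintype.card ι * ‖(C γ * ∏ s, (X - C (t s))).eval 0‖ := by
  have hfactor : ∏ s, (η * (1 + ‖t s‖)) ≤ ∏ s, (2 * ‖t s‖) :=
    prod_le_prod (fun s _ ↦ by positivity)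
      fun s _ ↦ mul_one_add_le_two_mul hη0 hη1 (hη s)
  rw [prod_mul_distrib, prod_mul_distrib, prod_const, prod_const, card_univ] at hfactor
  have hnorm : polyNorm (C γ * ∏ s, (X - C (t s))) ≤ ‖γ‖ * ∏ s, (1 + ‖t s‖) := by
    calc _ ≤ polyNorm (C γ) * polyNorm (∏ s, (X - C (t s))) := polyNorm_mul_le _ _
      _ ≤ ‖γ‖ * ∏ s, (1 + ‖t s‖) := by
        rw [polyNorm_C]
        gcongr
        refine (polyNorm_prod_le univ _).trans_eq ?_
        simp only [polyNorm_X_sub_C]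
  simp only [eval_mul, eval_C, eval_prod, eval_sub, eval_X, zero_sub, norm_mul, norm_prod,
    norm_neg]
  calc _ ≤ (‖γ‖ * ∏ s, (1 + ‖t s‖)) * η ^ Fintype.card ι :=
        mul_le_mul_of_nonneg_right hnorm (by positivity)
    _ = ‖γ‖ * (η ^ Fintype.card ι * ∏ s, (1 + ‖t s‖)) := by ring
    _ ≤ ‖γ‖ * (2 ^ Fintype.card ι * ∏ s, ‖t s‖) := by gcongr
    _ = 2 ^ Fintype.card ι * (‖γ‖ * ∏ s, ‖t s‖) := by ring

theorem stmt10_general (d : ℕ) (γ : ℂ) (t : Fin d → ℂ)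
    (p : Polynomial ℂ)
    (hp : p = Polynomial.C γ * ∏ s : Fin d, (Polynomial.X - Polynomial.C (t s)))
    (η : ℝ) (hη_le : ∀ s, η ≤ ‖t s‖) (hη_mem : ∃ s, ‖t s‖ = η)
    (hη1 : η ≤ 1) :
    1 / (4 * ((d : ℝ) + 1) * 48 ^ d) * polyNorm p * η ^ d ≤ ‖p.eval 0‖ := by
  obtain ⟨s, hs⟩ := hη_mem
  have hη0 : 0 ≤ η := hs ▸ norm_nonneg _
  have hbound := polyNorm_C_mul_prod_X_sub_C_mul_pow_le γ t hη0 hη1 hη_le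
  rw [Fintype.card_fin, ← hp] at hbound
  set c : ℝ := 1 / (4 * ((d : ℝ) + 1) * 48 ^ d)
  have hc : c * 2 ^ d ≤ 1 := by
    rw [div_mul_eq_mul_div, one_mul, div_le_one (by positivity)]
    calc (2 : ℝ) ^ d ≤ 48 ^ d := by gcongr; norm_num
      _ ≤ 4 * ((d : ℝ) + 1) * 48 ^ d :=
        le_mul_of_one_le_left (by positivity) (by linarith [d.cast_nonneg (α := ℝ)])
  calc c * polyNorm p * η ^ d = c * (polyNorm p * η ^ d) := mul_assoc _ _ _
    _ ≤ c * (2 ^ d * ‖p.eval 0‖) := by gcongr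
    _ = c * 2 ^ d * ‖p.eval 0‖ := (mul_assoc _ _ _).symm
    _ ≤ ‖p.eval 0‖ := mul_le_of_le_one_left (norm_nonneg _) hc

theorem stmt10 (d : ℕ) (hd : 1 ≤ d) (γ : ℂ) (hγ : γ ≠ 0) (t : Fin d → ℂ)
    (p : Polynomial ℂ)
    (hp : p = Polynomial.C γ * ∏ s : Fin d, (Polynomial.X - Polynomial.C (t s)))
    (η : ℝ) (hη_le : ∀ s, η ≤ ‖t s‖) (hη_mem : ∃ s, ‖t s‖ = η)
    (hη1 : η ≤ 1) :
    1 / (4 * ((d : ℝ) + 1) * 48 ^ d) * polyNorm p * η ^ d ≤ ‖p.eval 0‖ :=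
  stmt10_general d γ t p hp η hη_le hη_mem hη1
end
end

section
/- Let p be a univariate complex polynomial of degree at most d, and let D be a closed disk of radius κ, 0 < κ < 1, contained in the closed unit disk D₁ (not necessarily concentric). Then max_{t ∈ D₁} |p(t)| ≤ (12/κ)^d · max_{t ∈ D} |p(t)|. -/
/-!
Interpolate `p` at the `d + 1` points `c + κ ζ ^ i` on the boundary of the small disk, `ζ` a
primitive `(d + 1)`-th root of unity. For these nodes the denominators of the Lagrange basis
polynomials are computable: `∏_{i ≠ j} |ζ ^ j - ζ ^ i|` is the derivative of `X ^ (d + 1) - 1`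
at `ζ ^ j` in absolute value, i.e. `d + 1`. So each basis polynomial is at most
`(3 / κ) ^ d / (d + 1)` on the unit disk, and summing the `d + 1` terms of the interpolation
formula gives `|p t| ≤ (3 / κ) ^ d · max_D |p|`.
-/

open Polynomial Finset

namespace Lagrange

theorem norm_eval_basis {K : Type*} [NormedField K] {ι : Type*} [DecidableEq ι]
    (s : Finset ι) (v : ι → K) (j : ι) (t : K) :
    ‖(Lagrange.basis s v j).eval t‖ =
      (∏ i ∈ s.erase j, ‖t - v i‖) / ∏ i ∈ s.erase j, ‖v j - v i‖ := by
  simp only [Lagrange.basis, basisDivisor, eval_prod, eval_mul, eval_C, eval_sub, eval_X,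
    norm_prod, norm_mul, norm_inv, prod_mul_distrib, prod_inv_distrib]
  ring

end Lagrange

namespace IsPrimitiveRoot

theorem nodal_pow_eq_X_pow_sub_one {R : Type*} [CommRing R] [IsDomain R] {ζ : R} {n : ℕ}
    (hn : 0 < n) (hζ : IsPrimitiveRoot ζ n) :
    Lagrange.nodal (range n) (ζ ^ ·) = X ^ n - 1 := by
  have h : degree (1 : R[X]) < degree ((X : R[X]) ^ n) := by simp [hn]
  apply Polynomial.eq_of_degree_le_of_eval_index_eq (v := (ζ ^ ·)) (range n) hζ.injOn_pow
  · rw [Lagrange.degree_nodal]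
  · rw [Lagrange.degree_nodal, card_range, degree_sub_eq_left_of_degree_lt h, degree_pow,
      degree_X, nsmul_eq_mul, mul_one]
  · rw [Lagrange.nodal_monic, leadingCoeff_sub_of_degree_lt h, monic_X_pow]
  · intro i hi
    rw [Lagrange.eval_nodal_at_node hi, eval_sub, eval_pow, eval_X, eval_one, ← pow_mul,
      mul_comm i n, pow_mul, hζ.pow_eq_one, one_pow, sub_self]

theorem prod_norm_pow_sub_pow {ζ : ℂ} {n : ℕ} (hn : 0 < n) (hζ : IsPrimitiveRoot ζ n)
    {j : ℕ} (hj : j ∈ range n) :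
    ∏ i ∈ (range n).erase j, ‖ζ ^ j - ζ ^ i‖ = n := by
  have hderiv := Lagrange.eval_nodal_derivative_eval_node_eq (v := (ζ ^ ·)) hj
  rw [hζ.nodal_pow_eq_X_pow_sub_one hn, Lagrange.eval_nodal] at hderiv
  rw [← norm_prod, ← hderiv, derivative_sub, derivative_one, derivative_X_pow, sub_zero]
  simp [hζ.norm'_eq_one hn.ne']

variable {ζ : ℂ} {n : ℕ} (c : ℂ) {r : ℝ}

theorem injOn_add_mul_pow (hζ : IsPrimitiveRoot ζ n) (hr : r ≠ 0) :
    Set.InjOn (fun i => c + r * ζ ^ i) (range n) := fun _ ha _ hb hab =>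
  hζ.injOn_pow ha hb (mul_left_cancel₀ (Complex.ofReal_ne_zero.2 hr) (add_left_cancel hab))

theorem add_mul_pow_mem_sphere (hζ : IsPrimitiveRoot ζ n) (hn : n ≠ 0) (hr : 0 ≤ r) (i : ℕ) :
    c + r * ζ ^ i ∈ Metric.sphere c r := by
  simp [hζ.norm'_eq_one hn, abs_of_nonneg hr]

theorem norm_eval_basis_add_mul_pow_le {d : ℕ} (hζ : IsPrimitiveRoot ζ (d + 1)) (hr : 0 < r)
    {j : ℕ} (hj : j ∈ range (d + 1)) (t : ℂ) :
    ‖(Lagrange.basis (range (d + 1)) (fun i => c + r * ζ ^ i) j).eval t‖ ≤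
      ((‖t - c‖ + r) / r) ^ d / (d + 1) := by
  have hζ1 : ‖ζ‖ = 1 := hζ.norm'_eq_one d.succ_ne_zero
  have hcard : #((range (d + 1)).erase j) = d := by simp [card_erase_of_mem hj]
  have hnum :
      ∏ i ∈ (range (d + 1)).erase j, ‖t - (c + r * ζ ^ i)‖ ≤ (‖t - c‖ + r) ^ d := by
    calc _ ≤ ∏ _i ∈ (range (d + 1)).erase j, (‖t - c‖ + r) :=
          prod_le_prod (fun i _ => norm_nonneg _) fun i _ => ?_
      _ = (‖t - c‖ + r) ^ d := by rw [prod_const, hcard]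
    calc ‖t - (c + r * ζ ^ i)‖ = ‖(t - c) - r * ζ ^ i‖ := by ring_nf
      _ ≤ ‖t - c‖ + r := by
        simpa [hζ1, abs_of_pos hr] using norm_sub_le (t - c) (r * ζ ^ i)
  have hden : ∏ i ∈ (range (d + 1)).erase j, ‖(c + r * ζ ^ j) - (c + r * ζ ^ i)‖ =
      r ^ d * (d + 1) := by
    simp_rw [add_sub_add_left_eq_sub, ← mul_sub, norm_mul, Complex.norm_real, Real.norm_eq_abs,
      abs_of_pos hr, prod_mul_distrib, prod_const, hcard, hζ.prod_norm_pow_sub_pow d.succ_pos hj]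
    push_cast
    ring
  rw [Lagrange.norm_eval_basis, hden, div_pow, div_div]
  gcongr

end IsPrimitiveRoot

namespace Polynomial

theorem norm_eval_le_of_forall_mem_sphere {p : ℂ[X]} {d : ℕ} (hp : p.natDegree ≤ d) {c : ℂ}
    {r M : ℝ} (hr : 0 < r) (hM : ∀ z ∈ Metric.sphere c r, ‖p.eval z‖ ≤ M) (t : ℂ) :
    ‖p.eval t‖ ≤ ((‖t - c‖ + r) / r) ^ d * M := by
  obtain ⟨ζ, hζ⟩ : ∃ ζ : ℂ, IsPrimitiveRoot ζ (d + 1) :=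
    ⟨_, Complex.isPrimitiveRoot_exp (d + 1) d.succ_ne_zero⟩
  set v : ℕ → ℂ := fun i => c + r * ζ ^ i
  have hv : ∀ i, v i ∈ Metric.sphere c r := hζ.add_mul_pow_mem_sphere c d.succ_ne_zero hr.le
  have hM0 : 0 ≤ M := (norm_nonneg _).trans (hM _ (hv 0))
  have hdeg : p.degree < #(range (d + 1)) := by
    rw [card_range]
    exact p.degree_le_natDegree.trans_lt (by exact_mod_cast Nat.lt_succ_of_le hp)
  have hinterp := Lagrange.eq_interpolate (hζ.injOn_add_mul_pow c hr.ne') hdeg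
  calc ‖p.eval t‖
      = ‖∑ j ∈ range (d + 1),
          p.eval (v j) * (Lagrange.basis (range (d + 1)) v j).eval t‖ := by
        conv_lhs => rw [hinterp, Lagrange.interpolate_apply, eval_finsetSum]
        simp only [eval_mul, eval_C, v]
    _ ≤ ∑ j ∈ range (d + 1), M * (((‖t - c‖ + r) / r) ^ d / (d + 1)) := by
        refine norm_sum_le_of_le _ fun j hj => ?_
        rw [norm_mul]
        exact mul_le_mul (hM _ (hv j)) (hζ.norm_eval_basis_add_mul_pow_le c hr hj t)
          (norm_nonneg _) hM0
    _ = ((‖t - c‖ + r) / r) ^ d * M := by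
        rw [sum_const, card_range, nsmul_eq_mul]
        field_simp
        push_cast
        ring

end Polynomial

theorem stmt11 (d : ℕ) (p : Polynomial ℂ) (hp : p.natDegree ≤ d)
    (κ : ℝ) (hκ0 : 0 < κ) (hκ1 : κ < 1) (c : ℂ)
    (hD : Metric.closedBall c κ ⊆ Metric.closedBall (0 : ℂ) 1) :
    ∀ t ∈ Metric.closedBall (0 : ℂ) 1,
      ‖p.eval t‖ ≤
        (12 / κ) ^ d *
          sSup ((fun s => ‖p.eval s‖) '' Metric.closedBall c κ) := by
  intro t ht
  set M := sSup ((fun s => ‖p.eval s‖) '' Metric.closedBall c κ)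
  have hbdd : BddAbove ((fun s => ‖p.eval s‖) '' Metric.closedBall c κ) :=
    (isCompact_closedBall c κ).bddAbove_image (by fun_prop)
  have hM : ∀ z ∈ Metric.sphere c κ, ‖p.eval z‖ ≤ M := fun z hz =>
    le_csSup hbdd ⟨z, Metric.sphere_subset_closedBall hz, rfl⟩
  have hM0 : 0 ≤ M :=
    le_csSup_of_le hbdd ⟨c, Metric.mem_closedBall_self hκ0.le, rfl⟩ (norm_nonneg _)
  have hc : ‖c‖ ≤ 1 := by simpa using hD (Metric.mem_closedBall_self hκ0.le)
  have htc : ‖t - c‖ ≤ 2 := by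
    have := norm_sub_le t c
    simp only [Metric.mem_closedBall, dist_zero_right] at ht
    linarith
  calc ‖p.eval t‖ ≤ ((‖t - c‖ + κ) / κ) ^ d * M :=
        norm_eval_le_of_forall_mem_sphere hp hκ0 hM t
    _ ≤ (12 / κ) ^ d * M := by gcongr; linarith
end

section
/- Let p be a univariate complex polynomial of degree at most d, all of whose roots have modulus at least η > 0. Then for any τ₁, τ₂ ∈ ℂ with |τ₁| ≤ η/4 and |τ₂| ≤ η/4, one has |p(τ₁)| ≤ 4^d · |p(τ₂)|. -/
/-!
Factor `p = c ∏ (X - a)` over the roots. A root `a` has `‖a‖ ≥ η`, four times the bound on `τ₁`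
and `τ₂`, so `‖τ₁ - a‖ ≤ ‖a‖ + η/4 ≤ 4 (‖a‖ - η/4) ≤ 4 ‖τ₂ - a‖`; multiplying over the at most
`d` roots gives the factor `4 ^ d`.
-/

open Polynomial

theorem norm_sub_le_four_mul_norm_sub {E : Type*} [SeminormedAddCommGroup E] {x y a : E} {r : ℝ}
    (hx : ‖x‖ ≤ r) (hy : ‖y‖ ≤ r) (ha : 4 * r ≤ ‖a‖) : ‖x - a‖ ≤ 4 * ‖y - a‖ := by
  have hr : 0 ≤ r := (norm_nonneg x).trans hx
  have hxa : ‖x - a‖ ≤ ‖x‖ + ‖a‖ := norm_sub_le x a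
  have hya : ‖a‖ - ‖y‖ ≤ ‖y - a‖ := by
    rw [norm_sub_rev]
    exact norm_sub_norm_le a y
  linarith

theorem Polynomial.Splits.norm_eval_eq {K : Type*} [NormedField K] {p : K[X]} (hp : p.Splits)
    (x : K) : ‖p.eval x‖ = ‖p.leadingCoeff‖ * (p.roots.map fun a => ‖x - a‖).prod := by
  rw [hp.eval_eq_prod_roots, norm_mul]
  exact congrArg _ <|
    (map_multiset_prod (normHom (α := K)) _).trans (congrArg _ (Multiset.map_map _ _ _))

theorem Polynomial.Splits.norm_eval_le_pow_mul_norm_eval {K : Type*} [NormedField K] {p : K[X]}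
    (hp : p.Splits) {z w : K} {c : ℝ} (h : ∀ a ∈ p.roots, ‖z - a‖ ≤ c * ‖w - a‖) :
    ‖p.eval z‖ ≤ c ^ p.natDegree * ‖p.eval w‖ := by
  have hprod : (p.roots.map fun a => ‖z - a‖).prod ≤
      c ^ p.natDegree * (p.roots.map fun a => ‖w - a‖).prod :=
    calc (p.roots.map fun a => ‖z - a‖).prod
        ≤ (p.roots.map fun a => c * ‖w - a‖).prod :=
          Multiset.prod_map_le_prod_map₀ _ _ (fun _ _ => norm_nonneg _) h
      _ = c ^ p.natDegree * (p.roots.map fun a => ‖w - a‖).prod := by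
          rw [Multiset.prod_map_mul, Multiset.map_const', Multiset.prod_replicate,
            hp.natDegree_eq_card_roots]
  rw [hp.norm_eval_eq, hp.norm_eval_eq, mul_left_comm]
  exact mul_le_mul_of_nonneg_left hprod (norm_nonneg _)

theorem stmt12_general (d : ℕ) (p : Polynomial ℂ) (hp : p.natDegree ≤ d)
    (η : ℝ) (hroots : ∀ t : ℂ, p.eval t = 0 → η ≤ ‖t‖)
    (τ₁ τ₂ : ℂ) (h₁ : ‖τ₁‖ ≤ η / 4) (h₂ : ‖τ₂‖ ≤ η / 4) :
    ‖p.eval τ₁‖ ≤ 4 ^ d * ‖p.eval τ₂‖ := by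
  have hcomp : ‖p.eval τ₁‖ ≤ 4 ^ p.natDegree * ‖p.eval τ₂‖ :=
    (IsAlgClosed.splits p).norm_eval_le_pow_mul_norm_eval fun a ha =>
      norm_sub_le_four_mul_norm_sub h₁ h₂ (by linarith [hroots a (isRoot_of_mem_roots ha)])
  exact hcomp.trans <|
    mul_le_mul_of_nonneg_right (pow_le_pow_right₀ (by norm_num) hp) (norm_nonneg _)

theorem stmt12 (d : ℕ) (p : Polynomial ℂ) (hp : p.natDegree ≤ d)
    (η : ℝ) (hη : 0 < η) (hroots : ∀ t : ℂ, p.eval t = 0 → η ≤ ‖t‖)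
    (τ₁ τ₂ : ℂ) (h₁ : ‖τ₁‖ ≤ η / 4) (h₂ : ‖τ₂‖ ≤ η / 4) :
    ‖p.eval τ₁‖ ≤ 4 ^ d * ‖p.eval τ₂‖ :=
  stmt12_general d p hp η hroots τ₁ τ₂ h₁ h₂
end
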